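/- For every a > 0, every 1-Lipschitz function f : [0,a] → ℝ and every τ ∈ (0,1), one has T_τ(f) ≤ T(f) + 36τa. -/

import Mathlib

/-!
Given a good partition `u` and `τ ≤ 1/2`, build a `τ`-good partition greedily: from the current
point `b`, jump to the first point `u n ≤ b / (1 + τ)`, and if `u n < b / 2` stop at `b / 2`
instead. Each new interval is a block `[u n, u m]` of `u` with its endpoints raised; raising
costs a `1`-Lipschitz function at most the raise, and a block costs at most the sum of the drops
of `u` inside it, so the blocks together cost at most `T(f, u)`. A raise happens only when
`u n < b / 2`; as `b < (1 + τ) u (n - 1) ≤ 2 (1 + τ) u n`, it is then at most `3τ` times the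
length of the block. Every raise is paid twice and the blocks are disjoint, whence
`T_τ(f) ≤ T(f) + 6τa`. For `τ > 1/2` the halving partition is `τ`-good and every total drop is at
most `a ≤ 36τa`.
-/

open Set

/-- A good partition of `[0,a]`: a strictly decreasing sequence `a = a₀ > a₁ > … > 0`
tending to `0` with `a_{n-1}/a_n ≤ 2`. -/
def IsGoodPartition (a : ℝ) (u : ℕ → ℝ) : Prop :=
  u 0 = a ∧ (∀ n, 0 < u n) ∧ (∀ n, u (n + 1) < u n) ∧
    Filter.Tendsto u Filter.atTop (nhds 0) ∧ ∀ n, u n ≤ 2 * u (n + 1)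

/-- A `τ`-good partition: a good partition with `a_{n-1}/a_n ≥ 1 + τ`. -/
def IsTauGoodPartition (τ a : ℝ) (u : ℕ → ℝ) : Prop :=
  IsGoodPartition a u ∧ ∀ n, (1 + τ) * u (n + 1) ≤ u n

/-- The total drop of `f` according to the partition `(a_n)`:
`T(f,(a_n)) = Σ_{n≥1} (f(a_n) − min_{[a_n, a_{n-1}]} f)`. -/
noncomputable def totalDrop (f : ℝ → ℝ) (u : ℕ → ℝ) : ℝ :=
  ∑' n : ℕ, (f (u (n + 1)) - sInf (f '' Set.Icc (u (n + 1)) (u n)))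

/-- `T(f)`: the infimum of the total drop over all good partitions of `[0,a]`. -/
noncomputable def drop (a : ℝ) (f : ℝ → ℝ) : ℝ :=
  sInf {t | ∃ u, IsGoodPartition a u ∧ t = totalDrop f u}

/-- `T_τ(f)`: the infimum of the total drop over all `τ`-good partitions of `[0,a]`. -/
noncomputable def dropTau (τ a : ℝ) (f : ℝ → ℝ) : ℝ :=
  sInf {t | ∃ u, IsTauGoodPartition τ a u ∧ t = totalDrop f u}

open Filter

noncomputable def dropOn (f : ℝ → ℝ) (x y : ℝ) : ℝ :=
  f x - sInf (f '' Icc x y)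

section dropOn

variable {f : ℝ → ℝ} {x x' y y' z : ℝ}

lemma LipschitzOnWith.sub_le_abs_sub {s : Set ℝ} (hf : LipschitzOnWith 1 f s) (hx : x ∈ s)
    (hy : y ∈ s) : f x - f y ≤ |x - y| := by
  simpa [Real.dist_eq] using (le_abs_self _).trans (hf.dist_le_mul x hx y hy)

lemma sInf_image_Icc_le (hf : ContinuousOn f (Icc x y)) (hz : z ∈ Icc x y) :
    sInf (f '' Icc x y) ≤ f z :=
  csInf_le (isCompact_Icc.bddBelow_image hf) (mem_image_of_mem f hz)

lemma le_sInf_image_Icc {c : ℝ} (hxy : x ≤ y) (h : ∀ z ∈ Icc x y, c ≤ f z) :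
    c ≤ sInf (f '' Icc x y) :=
  le_csInf ((nonempty_Icc.2 hxy).image f) (forall_mem_image.2 h)

lemma dropOn_self : dropOn f x x = 0 := by
  simp [dropOn]

lemma dropOn_nonneg (hf : ContinuousOn f (Icc x y)) (hxy : x ≤ y) : 0 ≤ dropOn f x y :=
  sub_nonneg.2 (sInf_image_Icc_le hf (left_mem_Icc.2 hxy))

lemma dropOn_le_sub (hf : LipschitzOnWith 1 f (Icc x y)) (hxy : x ≤ y) :
    dropOn f x y ≤ y - x := by
  have : f x - (y - x) ≤ sInf (f '' Icc x y) := le_sInf_image_Icc hxy fun z hz => by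
    have := hf.sub_le_abs_sub (left_mem_Icc.2 hxy) hz
    rw [abs_sub_comm, abs_of_nonneg (sub_nonneg.2 hz.1)] at this
    linarith [hz.2]
  rw [dropOn]
  linarith

lemma dropOn_le_add (hf : ContinuousOn f (Icc x z)) (hxy : x ≤ y) (hyz : y ≤ z) :
    dropOn f x z ≤ dropOn f x y + dropOn f y z := by
  have hf₁ : ContinuousOn f (Icc x y) := hf.mono (Icc_subset_Icc_right hyz)
  have hf₂ : ContinuousOn f (Icc y z) := hf.mono (Icc_subset_Icc_left hxy)
  have hinf : sInf (f '' Icc x z) = min (sInf (f '' Icc x y)) (sInf (f '' Icc y z)) := by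
    rw [← Icc_union_Icc_eq_Icc hxy hyz, image_union]
    exact csInf_union (isCompact_Icc.bddBelow_image hf₁) ((nonempty_Icc.2 hxy).image f)
      (isCompact_Icc.bddBelow_image hf₂) ((nonempty_Icc.2 hyz).image f)
  have h₁ := sInf_image_Icc_le hf₁ (right_mem_Icc.2 hxy)
  have h₂ := sInf_image_Icc_le hf₂ (left_mem_Icc.2 hyz)
  simp only [dropOn, hinf]
  rcases min_cases (sInf (f '' Icc x y)) (sInf (f '' Icc y z)) with ⟨h, -⟩ | ⟨h, -⟩ <;>
    rw [h] <;> linarith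

lemma dropOn_le_dropOn_add (hf : LipschitzOnWith 1 f (Icc x y')) (hxx' : x ≤ x') (hxy : x ≤ y)
    (hyy' : y ≤ y') (hx'y' : x' ≤ y') :
    dropOn f x' y' ≤ dropOn f x y + (x' - x) + (y' - y) := by
  have hf₁ : ContinuousOn f (Icc x y) := hf.continuousOn.mono (Icc_subset_Icc_right hyy')
  have hx' : f x' - f x ≤ x' - x := by
    have := hf.sub_le_abs_sub ⟨hxx', hx'y'⟩ (left_mem_Icc.2 (hxy.trans hyy'))
    rwa [abs_of_nonneg (sub_nonneg.2 hxx')] at this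
  have hinf : sInf (f '' Icc x y) - (y' - y) ≤ sInf (f '' Icc x' y') :=
    le_sInf_image_Icc hx'y' fun z hz => by
      rcases le_total z y with hzy | hyz
      · linarith [sInf_image_Icc_le hf₁ ⟨hxx'.trans hz.1, hzy⟩, hyy']
      · have := hf.sub_le_abs_sub ⟨hxy, hyy'⟩ ⟨hxx'.trans hz.1, hz.2⟩
        rw [abs_sub_comm, abs_of_nonneg (sub_nonneg.2 hyz)] at this
        linarith [sInf_image_Icc_le hf₁ (right_mem_Icc.2 hxy), hz.2]
  rw [dropOn, dropOn]
  linarith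

end dropOn

noncomputable def firstBelow (u : ℕ → ℝ) (c : ℝ) : ℕ :=
  sInf {n | u n ≤ c}

lemma lt_apply_of_lt_firstBelow {u : ℕ → ℝ} {c : ℝ} {m : ℕ} (hm : m < firstBelow u c) :
    c < u m :=
  not_le.1 (Nat.notMem_of_lt_sInf hm)

noncomputable def coarsen (u : ℕ → ℝ) (τ : ℝ) : ℕ → ℝ
  | 0 => u 0
  | k + 1 => max (u (firstBelow u (coarsen u τ k / (1 + τ)))) (coarsen u τ k / 2)

noncomputable def coarsenIdx (u : ℕ → ℝ) (τ : ℝ) : ℕ → ℕ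
  | 0 => 0
  | k + 1 => firstBelow u (coarsen u τ k / (1 + τ))

lemma coarsen_succ {u : ℕ → ℝ} {τ : ℝ} (k : ℕ) :
    coarsen u τ (k + 1) = max (u (coarsenIdx u τ (k + 1))) (coarsen u τ k / 2) := rfl

lemma coarsen_le_two_mul_succ {u : ℕ → ℝ} {τ : ℝ} (k : ℕ) :
    coarsen u τ k ≤ 2 * coarsen u τ (k + 1) := by
  rw [coarsen_succ]
  linarith [le_max_right (u (coarsenIdx u τ (k + 1))) (coarsen u τ k / 2)]

namespace IsGoodPartition

variable {f : ℝ → ℝ} {a τ c : ℝ} {u : ℕ → ℝ}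

lemma pos (hu : IsGoodPartition a u) (n : ℕ) : 0 < u n := hu.2.1 n

lemma strictAnti (hu : IsGoodPartition a u) : StrictAnti u :=
  strictAnti_nat_of_succ_lt hu.2.2.1

lemma tendsto (hu : IsGoodPartition a u) : Tendsto u atTop (nhds 0) := hu.2.2.2.1

lemma mem_Icc (hu : IsGoodPartition a u) (n : ℕ) : u n ∈ Icc 0 a :=
  ⟨(hu.pos n).le, hu.1 ▸ hu.strictAnti.antitone (Nat.zero_le n)⟩

lemma dropOn_nonneg (hu : IsGoodPartition a u) (hf : ContinuousOn f (Icc 0 a)) (n : ℕ) :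
    0 ≤ dropOn f (u (n + 1)) (u n) :=
  _root_.dropOn_nonneg (hf.mono (Set.Icc_subset _ (hu.mem_Icc _) (hu.mem_Icc _))) (hu.2.2.1 n).le

lemma sum_range_dropOn_le (hu : IsGoodPartition a u) (hf : LipschitzOnWith 1 f (Icc 0 a))
    (N : ℕ) : ∑ n ∈ Finset.range N, dropOn f (u (n + 1)) (u n) ≤ a :=
  calc ∑ n ∈ Finset.range N, dropOn f (u (n + 1)) (u n) ≤ ∑ n ∈ Finset.range N, (u n - u (n + 1)) :=
        Finset.sum_le_sum fun n _ => dropOn_le_sub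
          (hf.mono (Set.Icc_subset _ (hu.mem_Icc _) (hu.mem_Icc _))) (hu.2.2.1 n).le
    _ = a - u N := by rw [Finset.sum_range_sub', hu.1]
    _ ≤ a := by linarith [hu.pos N]

lemma summable_dropOn (hu : IsGoodPartition a u) (hf : LipschitzOnWith 1 f (Icc 0 a)) :
    Summable fun n => dropOn f (u (n + 1)) (u n) :=
  summable_of_sum_range_le (hu.dropOn_nonneg hf.continuousOn) (hu.sum_range_dropOn_le hf)

lemma totalDrop_nonneg (hu : IsGoodPartition a u) (hf : ContinuousOn f (Icc 0 a)) :
    0 ≤ totalDrop f u :=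
  tsum_nonneg (hu.dropOn_nonneg hf)

lemma totalDrop_le (hu : IsGoodPartition a u) (hf : LipschitzOnWith 1 f (Icc 0 a)) :
    totalDrop f u ≤ a :=
  (hu.summable_dropOn hf).tsum_le_of_sum_range_le (hu.sum_range_dropOn_le hf)

lemma sum_range_dropOn_le_totalDrop (hu : IsGoodPartition a u)
    (hf : LipschitzOnWith 1 f (Icc 0 a)) (N : ℕ) :
    ∑ n ∈ Finset.range N, dropOn f (u (n + 1)) (u n) ≤ totalDrop f u :=
  (hu.summable_dropOn hf).sum_le_tsum _ fun n _ => hu.dropOn_nonneg hf.continuousOn n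

lemma dropOn_le_sum_Ico (hu : IsGoodPartition a u) (hf : ContinuousOn f (Icc 0 a)) {p q : ℕ}
    (hpq : p ≤ q) : dropOn f (u q) (u p) ≤ ∑ n ∈ Finset.Ico p q, dropOn f (u (n + 1)) (u n) := by
  induction q, hpq using Nat.le_induction with
  | base => simp [dropOn_self]
  | succ q hpq ih =>
    rw [Finset.sum_Ico_succ_top hpq]
    have := dropOn_le_add (hf.mono (Set.Icc_subset _ (hu.mem_Icc _) (hu.mem_Icc p)))
      (hu.2.2.1 q).le (hu.strictAnti.antitone hpq)
    linarith


lemma apply_firstBelow_le (hu : IsGoodPartition a u) (hc : 0 < c) : u (firstBelow u c) ≤ c :=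
  Nat.sInf_mem ((hu.tendsto.eventually (gt_mem_nhds hc)).exists.imp fun _ => le_of_lt)

lemma firstBelow_spec (hu : IsGoodPartition a u) (hc : 0 < c) {m : ℕ} (hcm : c < u m) :
    m < firstBelow u c ∧ u (firstBelow u c) ≤ c ∧ c < u (firstBelow u c - 1) := by
  have hle := hu.apply_firstBelow_le hc
  have hm : m < firstBelow u c := by
    by_contra! h
    linarith [hu.strictAnti.antitone h]
  exact ⟨hm, hle, lt_apply_of_lt_firstBelow (by omega)⟩

lemma le_two_mul_pred (hu : IsGoodPartition a u) {n : ℕ} (hn : 0 < n) : u (n - 1) ≤ 2 * u n := by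
  simpa [Nat.sub_add_cancel hn] using hu.2.2.2.2 (n - 1)


lemma coarsenIdx_succ_spec (hu : IsGoodPartition a u) (hτ : 0 < τ) {k : ℕ}
    (hk : coarsen u τ k ∈ Ico (u (coarsenIdx u τ k)) ((1 + τ) * u (coarsenIdx u τ k))) :
    coarsenIdx u τ k < coarsenIdx u τ (k + 1) ∧
      u (coarsenIdx u τ (k + 1)) ≤ coarsen u τ k / (1 + τ) ∧
      coarsen u τ k < (1 + τ) * u (coarsenIdx u τ (k + 1) - 1) := by
  have hc : 0 < coarsen u τ k / (1 + τ) := by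
    have := hu.pos (coarsenIdx u τ k)
    exact div_pos (by linarith [hk.1]) (by linarith)
  have hcm : coarsen u τ k / (1 + τ) < u (coarsenIdx u τ k) :=
    (div_lt_iff₀' (by linarith)).2 hk.2
  obtain ⟨h₁, h₂, h₃⟩ := hu.firstBelow_spec hc hcm
  exact ⟨h₁, h₂, (div_lt_iff₀' (by linarith)).1 h₃⟩

lemma coarsen_mem_Ico (hu : IsGoodPartition a u) (hτ : 0 < τ) (k : ℕ) :
    coarsen u τ k ∈ Ico (u (coarsenIdx u τ k)) ((1 + τ) * u (coarsenIdx u τ k)) := by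
  induction k with
  | zero => exact show u 0 ∈ Ico (u 0) ((1 + τ) * u 0) from ⟨le_rfl, by nlinarith [hu.pos 0]⟩
  | succ k ih =>
    obtain ⟨hlt, -, hpred⟩ := hu.coarsenIdx_succ_spec hτ ih
    have htwo := hu.le_two_mul_pred (n := coarsenIdx u τ (k + 1)) (by omega)
    have hpos := hu.pos (coarsenIdx u τ (k + 1))
    rw [coarsen_succ]
    exact ⟨le_max_left _ _, max_lt (by nlinarith) (by nlinarith)⟩

lemma coarsenIdx_lt_succ (hu : IsGoodPartition a u) (hτ : 0 < τ) (k : ℕ) :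
    coarsenIdx u τ k < coarsenIdx u τ (k + 1) :=
  (hu.coarsenIdx_succ_spec hτ (hu.coarsen_mem_Ico hτ k)).1

lemma strictMono_coarsenIdx (hu : IsGoodPartition a u) (hτ : 0 < τ) :
    StrictMono (coarsenIdx u τ) :=
  strictMono_nat_of_lt_succ (hu.coarsenIdx_lt_succ hτ)

lemma coarsen_pos (hu : IsGoodPartition a u) (hτ : 0 < τ) (k : ℕ) : 0 < coarsen u τ k :=
  (hu.pos _).trans_le (hu.coarsen_mem_Ico hτ k).1

lemma one_add_mul_coarsen_succ_le (hu : IsGoodPartition a u) (hτ : 0 < τ) (hτ₁ : τ ≤ 1)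
    (k : ℕ) : (1 + τ) * coarsen u τ (k + 1) ≤ coarsen u τ k := by
  have hle := (hu.coarsenIdx_succ_spec hτ (hu.coarsen_mem_Ico hτ k)).2.1
  have hpos := hu.coarsen_pos hτ k
  rw [coarsen_succ, mul_max_of_nonneg _ _ (by linarith)]
  exact max_le ((le_div_iff₀' (by linarith)).1 hle) (by nlinarith)

lemma coarsen_succ_sub_le (hu : IsGoodPartition a u) (hτ : 0 < τ) (hτ₂ : τ ≤ 1 / 2) (k : ℕ) :
    coarsen u τ (k + 1) - u (coarsenIdx u τ (k + 1)) ≤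
      3 * τ * (u (coarsenIdx u τ k) - u (coarsenIdx u τ (k + 1))) := by
  set m := coarsenIdx u τ k
  set n := coarsenIdx u τ (k + 1)
  set b := coarsen u τ k
  obtain ⟨hmn, hnb, hbn⟩ := hu.coarsenIdx_succ_spec hτ (hu.coarsen_mem_Ico hτ k)
  have hnb : (1 + τ) * u n ≤ b := (le_div_iff₀' (by linarith)).1 hnb
  have htwo : u (n - 1) ≤ 2 * u n := hu.le_two_mul_pred (by omega)
  have hpred : u (n - 1) ≤ u m := hu.strictAnti.antitone (by omega)
  have hnm : u n ≤ u m := hu.strictAnti.antitone hmn.le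
  rw [coarsen_succ]
  rcases le_total (b / 2) (u n) with h | h
  · rw [max_eq_left h]
    nlinarith
  · rw [max_eq_right h]
    have : u n ≤ 3 / 4 * u (n - 1) := by nlinarith
    nlinarith [mul_le_mul_of_nonneg_left this hτ.le]


lemma isTauGoodPartition_coarsen (hu : IsGoodPartition a u) (hτ : 0 < τ) (hτ₁ : τ ≤ 1) :
    IsTauGoodPartition τ a (coarsen u τ) := by
  have hstep := hu.one_add_mul_coarsen_succ_le hτ hτ₁
  have hpos := hu.coarsen_pos hτ
  have hlim : Tendsto (fun k => (1 + τ) * u (coarsenIdx u τ k)) atTop (nhds 0) := by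
    simpa using (hu.tendsto.comp (hu.strictMono_coarsenIdx hτ).tendsto_atTop).const_mul (1 + τ)
  refine ⟨⟨hu.1, hpos, fun k => ?_, ?_, coarsen_le_two_mul_succ⟩, hstep⟩
  · nlinarith [hstep k, hpos (k + 1)]
  · exact squeeze_zero (fun k => (hpos k).le) (fun k => (hu.coarsen_mem_Ico hτ k).2.le) hlim

lemma dropOn_coarsen_succ_le (hu : IsGoodPartition a u) (hf : LipschitzOnWith 1 f (Icc 0 a))
    (hτ : 0 < τ) (hτ₁ : τ ≤ 1) (k : ℕ) :
    dropOn f (coarsen u τ (k + 1)) (coarsen u τ k) ≤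
      dropOn f (u (coarsenIdx u τ (k + 1))) (u (coarsenIdx u τ k)) +
        (coarsen u τ (k + 1) - u (coarsenIdx u τ (k + 1))) +
        (coarsen u τ k - u (coarsenIdx u τ k)) := by
  have hv := hu.isTauGoodPartition_coarsen hτ hτ₁
  exact dropOn_le_dropOn_add
    (hf.mono (Set.Icc_subset _ (hu.mem_Icc _) (hv.1.mem_Icc k)))
    (hu.coarsen_mem_Ico hτ (k + 1)).1 (hu.strictAnti.antitone (hu.coarsenIdx_lt_succ hτ k).le)
    (hu.coarsen_mem_Ico hτ k).1 (hv.1.2.2.1 k).le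

/-- The raising error of step `K` is paid again in step `K + 1`; carrying it on the left makes
the induction close. -/
lemma sum_range_dropOn_coarsen_le (hu : IsGoodPartition a u)
    (hf : LipschitzOnWith 1 f (Icc 0 a)) (hτ : 0 < τ) (hτ₂ : τ ≤ 1 / 2) (K : ℕ) :
    ∑ k ∈ Finset.range K, dropOn f (coarsen u τ (k + 1)) (coarsen u τ k) +
        (coarsen u τ K - u (coarsenIdx u τ K)) ≤
      ∑ n ∈ Finset.range (coarsenIdx u τ K), dropOn f (u (n + 1)) (u n) +
        6 * τ * (a - u (coarsenIdx u τ K)) := by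
  induction K with
  | zero => simp [coarsen, coarsenIdx, hu.1]
  | succ K ih =>
    rw [Finset.sum_range_succ,
      ← Finset.sum_range_add_sum_Ico _ (hu.coarsenIdx_lt_succ hτ K).le]
    have := hu.dropOn_coarsen_succ_le hf hτ (by linarith) K
    have := hu.dropOn_le_sum_Ico hf.continuousOn (hu.coarsenIdx_lt_succ hτ K).le
    have := hu.coarsen_succ_sub_le hτ hτ₂ K
    linarith

lemma totalDrop_coarsen_le (hu : IsGoodPartition a u) (hf : LipschitzOnWith 1 f (Icc 0 a))
    (hτ : 0 < τ) (hτ₂ : τ ≤ 1 / 2) :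
    totalDrop f (coarsen u τ) ≤ totalDrop f u + 6 * τ * a := by
  refine ((hu.isTauGoodPartition_coarsen hτ (by linarith)).1.summable_dropOn hf)
    |>.tsum_le_of_sum_range_le fun K => ?_
  have := hu.sum_range_dropOn_coarsen_le hf hτ hτ₂ K
  have := hu.sum_range_dropOn_le_totalDrop hf (coarsenIdx u τ K)
  have := (hu.coarsen_mem_Ico hτ K).1
  have := hu.pos (coarsenIdx u τ K)
  nlinarith

end IsGoodPartition

lemma isTauGoodPartition_div_two_pow {a τ : ℝ} (ha : 0 < a) (hτ : τ ≤ 1) :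
    IsTauGoodPartition τ a fun n => a / 2 ^ n := by
  refine ⟨⟨by simp, fun n => by positivity, fun n => ?_, ?_, fun n => ?_⟩, fun n => ?_⟩
  · dsimp only
    rw [pow_succ, ← div_div]
    exact div_lt_self (by positivity) one_lt_two
  · simpa [div_eq_mul_inv] using
      (tendsto_pow_atTop_nhds_zero_of_lt_one (r := (2 : ℝ)⁻¹) (by norm_num) (by norm_num)).const_mul a
  · dsimp only
    rw [pow_succ, ← div_div, mul_div_cancel₀ _ two_ne_zero]
  · dsimp only
    rw [pow_succ, ← div_div]
    have : 0 < a / 2 ^ n := by positivity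
    nlinarith

section drop

variable {f : ℝ → ℝ} {a τ : ℝ}

lemma drop_nonneg (hf : ContinuousOn f (Icc 0 a)) : 0 ≤ drop a f :=
  Real.sInf_nonneg fun _ ⟨_, hu, ht⟩ => ht ▸ hu.totalDrop_nonneg hf

lemma dropTau_le_totalDrop (hf : ContinuousOn f (Icc 0 a)) {v : ℕ → ℝ}
    (hv : IsTauGoodPartition τ a v) : dropTau τ a f ≤ totalDrop f v :=
  csInf_le ⟨0, fun _ ⟨_, hw, ht⟩ => ht ▸ hw.1.totalDrop_nonneg hf⟩ ⟨v, hv, rfl⟩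

lemma dropTau_le_drop_add (hf : LipschitzOnWith 1 f (Icc 0 a)) (ha : 0 < a) (hτ : 0 < τ)
    (hτ₂ : τ ≤ 1 / 2) : dropTau τ a f ≤ drop a f + 6 * τ * a := by
  rw [← sub_le_iff_le_add]
  refine le_csInf ⟨_, _, (isTauGoodPartition_div_two_pow ha (by linarith)).1, rfl⟩ ?_
  rintro _ ⟨u, hu, rfl⟩
  have := dropTau_le_totalDrop hf.continuousOn (hu.isTauGoodPartition_coarsen hτ (by linarith))
  linarith [hu.totalDrop_coarsen_le hf hτ hτ₂]

end drop

/-- **Corollary.** For every `1`-Lipschitz `f : [0,a] → ℝ` and `τ ∈ (0,1)`,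
`T_τ(f) ≤ T(f) + 36τa`. -/
theorem statement16 (a τ : ℝ) (ha : 0 < a) (hτ : τ ∈ Set.Ioo (0 : ℝ) 1) (f : ℝ → ℝ)
    (hf : LipschitzOnWith 1 f (Set.Icc 0 a)) :
    dropTau τ a f ≤ drop a f + 36 * τ * a := by
  obtain ⟨hτ₀, hτ₁⟩ := hτ
  have hdrop := drop_nonneg hf.continuousOn
  rcases le_or_gt τ (1 / 2) with hτ₂ | hτ₂
  · nlinarith [dropTau_le_drop_add hf ha hτ₀ hτ₂]
  · have hv := isTauGoodPartition_div_two_pow ha hτ₁.le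
    nlinarith [dropTau_le_totalDrop hf.continuousOn hv, hv.1.totalDrop_le hf]
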